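/- Let GΘ be a graph product over a finite simple graph Θ, fix a vertex v with vertex group Γ = G_v, and let W ⊆ GΘ be the set consisting of e together with all elements not expressible as a nontrivial reduced word ending with an element of Γ. If Θ is irreducible (and has more than one vertex), then the subgroup G_{lk(v)} generated by the link of v acts on W by right multiplication, and W properly contains G_{lk(v)}; in particular a fundamental domain W̃ for this action contains a non-identity element. -/

import Mathlib

open Monoid MeasureTheory

/-- The normal subgroup of the free product `⋆ᵥ A v` generated by the commutators
`[a,b]` with `a ∈ A i`, `b ∈ A j`, for adjacent vertices `i, j` of `Θ`. -/
def graphProductRels {V : Type} (Θ : SimpleGraph V) (A : V → Type) [∀ v, Group (A v)] :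
    Subgroup (Monoid.CoprodI A) :=
  Subgroup.normalClosure
    {x | ∃ (i j : V) (a : A i) (b : A j), Θ.Adj i j ∧
      x = Monoid.CoprodI.of a * Monoid.CoprodI.of b *
            (Monoid.CoprodI.of a)⁻¹ * (Monoid.CoprodI.of b)⁻¹}

instance graphProductRels_normal {V : Type} (Θ : SimpleGraph V) (A : V → Type)
    [∀ v, Group (A v)] : (graphProductRels Θ A).Normal :=
  Subgroup.normalClosure_normal

/-- The graph product of the groups `A v` over the graph `Θ`: the quotient of the free
product by the relations making vertex groups of adjacent vertices commute. -/
def GraphProduct {V : Type} (Θ : SimpleGraph V) (A : V → Type) [∀ v, Group (A v)] :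
    Type :=
  Monoid.CoprodI A ⧸ graphProductRels Θ A

instance {V : Type} (Θ : SimpleGraph V) (A : V → Type) [∀ v, Group (A v)] :
    Group (GraphProduct Θ A) :=
  inferInstanceAs (Group (Monoid.CoprodI A ⧸ graphProductRels Θ A))

/-- The canonical homomorphism from a vertex group into the graph product. -/
def gpOf {V : Type} (Θ : SimpleGraph V) (A : V → Type) [∀ v, Group (A v)] (v : V) :
    A v →* GraphProduct Θ A :=
  (QuotientGroup.mk' (graphProductRels Θ A)).comp Monoid.CoprodI.of

/-- An element of a graph product is a syllable if it lies in (the image of) one of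
the vertex groups. -/
def IsSyllable {V : Type} (Θ : SimpleGraph V) (A : V → Type) [∀ v, Group (A v)]
    (x : GraphProduct Θ A) : Prop :=
  ∃ (v : V) (a : A v), x = gpOf Θ A v a

/-- The syllable length of an element of a graph product: the least number of
syllables needed to write it. -/
noncomputable def sylLength {V : Type} (Θ : SimpleGraph V) (A : V → Type)
    [∀ v, Group (A v)] (g : GraphProduct Θ A) : ℕ :=
  sInf {n | ∃ L : List (GraphProduct Θ A),
    (∀ x ∈ L, IsSyllable Θ A x) ∧ L.prod = g ∧ L.length = n}

/-- The subgroup of the graph product generated by the vertex groups of the link of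
`v`. -/
def linkSubgroup {V : Type} (Θ : SimpleGraph V) (A : V → Type) [∀ v, Group (A v)]
    (v : V) : Subgroup (GraphProduct Θ A) :=
  Subgroup.closure (⋃ u ∈ Θ.neighborSet v, Set.range (gpOf Θ A u))

/-- `w` is equal to a nontrivial reduced word (minimal-length syllable decomposition
with nontrivial syllables) ending with a nontrivial element of the vertex group
`A v`. -/
def EndsInVertex {V : Type} (Θ : SimpleGraph V) (A : V → Type) [∀ v, Group (A v)]
    (v : V) (w : GraphProduct Θ A) : Prop :=
  ∃ (L : List (GraphProduct Θ A)) (b : A v), L ≠ [] ∧ b ≠ 1 ∧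
    (∀ x ∈ L, IsSyllable Θ A x ∧ x ≠ 1) ∧ L.prod = w ∧
    L.length = sylLength Θ A w ∧ L.getLast? = some (gpOf Θ A v b)

/-- The set `W` of minimal-length coset representatives for `GΘ/Γ`, `Γ = A v`: the
identity together with all elements not expressible as a nontrivial reduced word
ending with an element of `A v`. -/
def minimalReps {V : Type} (Θ : SimpleGraph V) (A : V → Type) [∀ v, Group (A v)]
    (v : V) : Set (GraphProduct Θ A) :=
  {w | w = 1 ∨ ¬ EndsInVertex Θ A v w}

/-- A graph is irreducible if it is not the join of two nonempty full subgraphs. -/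
def GraphIrreducible {V : Type} (Θ : SimpleGraph V) : Prop :=
  ¬ ∃ S : Set V, S.Nonempty ∧ Sᶜ.Nonempty ∧ ∀ a ∈ S, ∀ b ∈ Sᶜ, Θ.Adj a b

/-!
Right multiplication by vertex-group elements acts on reduced words taken up to shuffling
adjacent syllables of commuting vertices; checking the defining relations of the graph product
on this action gives every element a normal form, whose length is the syllable length. An
element ends in `v` exactly when a syllable of `A v` can be shuffled to the end of its normal
form. Right multiplication by a syllable of a vertex in `lk(v)` commutes past such a syllable
and never creates one, so `G_{lk(v)}` preserves `W`. Irreducibility supplies a vertex `u ≠ v`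
outside `lk(v)`; a nontrivial element of `A u` lies in `W` but not in `G_{lk(v)}`, because the
projection onto `A u` kills `G_{lk(v)}`.
-/

namespace GraphProduct

variable {V : Type} {Θ : SimpleGraph V} {A : V → Type}

section

variable [∀ v, Group (A v)]

theorem gpOf_commute {i j : V} (h : Θ.Adj i j) (a : A i) (b : A j) :
    Commute (gpOf Θ A i a) (gpOf Θ A j b) := by
  have hrel : CoprodI.of a * CoprodI.of b * (CoprodI.of a)⁻¹ * (CoprodI.of b)⁻¹ ∈
      graphProductRels Θ A :=
    Subgroup.subset_normalClosure ⟨i, j, a, b, h, rfl⟩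
  rw [← QuotientGroup.eq_one_iff] at hrel
  exact commutatorElement_eq_one_iff_mul_comm.mp hrel

theorem induction_on {motive : GraphProduct Θ A → Prop} (g : GraphProduct Θ A)
    (one : motive 1) (of : ∀ u (a : A u), motive (gpOf Θ A u a))
    (mul : ∀ x y, motive x → motive y → motive (x * y)) : motive g := by
  induction g using QuotientGroup.induction_on with
  | H x =>
    induction x using CoprodI.induction_on with
    | one => exact one
    | of u a => exact of u a
    | mul x y hx hy => exact mul _ _ hx hy

def lift {H : Type*} [Group H] (φ : ∀ u, A u →* H)
    (hφ : ∀ i j, Θ.Adj i j → ∀ a b, Commute (φ i a) (φ j b)) : GraphProduct Θ A →* H :=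
  QuotientGroup.lift (graphProductRels Θ A) (CoprodI.lift φ) <|
    Subgroup.normalClosure_le_normal <| by
      rintro _ ⟨i, j, a, b, h, rfl⟩
      simp [(hφ i j h a b).eq]

@[simp] theorem lift_gpOf {H : Type*} [Group H] (φ : ∀ u, A u →* H)
    (hφ : ∀ i j, Θ.Adj i j → ∀ a b, Commute (φ i a) (φ j b)) (u : V) (a : A u) :
    lift φ hφ (gpOf Θ A u a) = φ u a :=
  CoprodI.lift_of φ a

open Classical in
noncomputable def toPi : GraphProduct Θ A →* ∀ u, A u :=
  lift (MonoidHom.mulSingle A) fun _ _ h => Pi.mulSingle_commute h.ne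

open Classical in
theorem toPi_gpOf (u : V) (a : A u) : toPi (gpOf Θ A u a) = Pi.mulSingle u a :=
  lift_gpOf _ _ u a

theorem toPi_gpOf_self (u : V) (a : A u) : toPi (gpOf Θ A u a) u = a := by
  simp [toPi_gpOf]

theorem toPi_gpOf_of_ne {u w : V} (h : w ≠ u) (a : A w) : toPi (gpOf Θ A w a) u = 1 := by
  simp [toPi_gpOf, h.symm]

theorem gpOf_ne_one {u : V} {a : A u} (ha : a ≠ 1) : gpOf Θ A u a ≠ 1 := fun h =>
  ha (by simpa [h] using (toPi_gpOf_self (Θ := Θ) u a).symm)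

theorem gpOf_notMem_linkSubgroup {u v : V} (hadj : ¬ Θ.Adj v u) {a : A u} (ha : a ≠ 1) :
    gpOf Θ A u a ∉ linkSubgroup Θ A v := by
  suffices linkSubgroup Θ A v ≤ ((Pi.evalMonoidHom A u).comp toPi).ker from
    fun h => ha (by simpa [toPi_gpOf_self] using this h)
  refine (Subgroup.closure_le _).mpr ?_
  simp only [Set.iUnion_subset_iff, Set.range_subset_iff]
  intro w hw b
  exact toPi_gpOf_of_ne (Θ := Θ) (by rintro rfl; exact hadj hw) b

end

abbrev Syllable (A : V → Type) : Type := Σ u, A u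

variable (Θ) in
open Classical in
/-- The syllable of `A u` that can be shuffled to the end of the word, if any. -/
noncomputable def trailing (u : V) : List (Syllable A) → Option (A u)
  | [] => none
  | ⟨w, b⟩ :: L =>
    if h : w = u then some (h ▸ b) else if Θ.Adj w u then trailing u L else none

@[simp] theorem trailing_nil (u : V) : trailing Θ u ([] : List (Syllable A)) = none := rfl

@[simp] theorem trailing_cons_self (u : V) (b : A u) (L : List (Syllable A)) :
    trailing Θ u (⟨u, b⟩ :: L) = some b := by
  simp [trailing]

theorem trailing_cons_of_adj {u w : V} (h : Θ.Adj w u) (b : A w) (L : List (Syllable A)) :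
    trailing Θ u (⟨w, b⟩ :: L) = trailing Θ u L := by
  rw [trailing, dif_neg h.ne, if_pos h]

theorem trailing_cons_of_not_adj {u w : V} (h₁ : w ≠ u) (h₂ : ¬ Θ.Adj w u) (b : A w)
    (L : List (Syllable A)) : trailing Θ u (⟨w, b⟩ :: L) = none := by
  rw [trailing, dif_neg h₁, if_neg h₂]

variable (Θ) in
inductive Shuffle : List (Syllable A) → List (Syllable A) → Prop
  | swap (x y : Syllable A) (L : List (Syllable A)) (h : Θ.Adj x.1 y.1) :
      Shuffle (x :: y :: L) (y :: x :: L)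
  | cons (z : Syllable A) {L L' : List (Syllable A)} : Shuffle L L' → Shuffle (z :: L) (z :: L')

variable (Θ) in
def ShuffleEquiv : List (Syllable A) → List (Syllable A) → Prop :=
  Relation.ReflTransGen (Shuffle Θ)

theorem ShuffleEquiv.rfl {L : List (Syllable A)} : ShuffleEquiv Θ L L :=
  Relation.ReflTransGen.refl

theorem Shuffle.shuffleEquiv {L L' : List (Syllable A)} (h : Shuffle Θ L L') :
    ShuffleEquiv Θ L L' :=
  Relation.ReflTransGen.single h

theorem ShuffleEquiv.trans {L M N : List (Syllable A)} (h : ShuffleEquiv Θ L M)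
    (h' : ShuffleEquiv Θ M N) : ShuffleEquiv Θ L N :=
  Relation.ReflTransGen.trans h h'

theorem Shuffle.symm {L L' : List (Syllable A)} (h : Shuffle Θ L L') : Shuffle Θ L' L := by
  induction h with
  | swap x y L h => exact .swap y x L h.symm
  | cons z _ ih => exact .cons z ih

theorem ShuffleEquiv.symm {L L' : List (Syllable A)} (h : ShuffleEquiv Θ L L') :
    ShuffleEquiv Θ L' L := by
  induction h with
  | refl => exact .rfl
  | tail _ h ih => exact h.symm.shuffleEquiv.trans ih

theorem ShuffleEquiv.cons {L L' : List (Syllable A)} (z : Syllable A)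
    (h : ShuffleEquiv Θ L L') : ShuffleEquiv Θ (z :: L) (z :: L') :=
  Relation.ReflTransGen.lift (z :: ·) (fun _ _ h => Shuffle.cons z h) _ _ h

theorem ShuffleEquiv.eq_of_shuffle {β : Sort*} {f : List (Syllable A) → β}
    (hf : ∀ L L', Shuffle Θ L L' → f L = f L') {L L' : List (Syllable A)}
    (h : ShuffleEquiv Θ L L') : f L = f L' := by
  induction h with
  | refl => rfl
  | tail _ h ih => exact ih.trans (hf _ _ h)

theorem Shuffle.length_eq {L L' : List (Syllable A)} (h : Shuffle Θ L L') :
    L.length = L'.length := by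
  induction h <;> simp [*]

theorem Shuffle.trailing_eq {L L' : List (Syllable A)} (h : Shuffle Θ L L') (u : V) :
    trailing Θ u L = trailing Θ u L' := by
  induction h with
  | swap x y L h =>
    obtain ⟨w₁, b₁⟩ := x
    obtain ⟨w₂, b₂⟩ := y
    by_cases h₁ : w₁ = u
    · subst h₁
      rw [trailing_cons_self, trailing_cons_of_adj h.symm, trailing_cons_self]
    by_cases h₂ : w₂ = u
    · subst h₂
      rw [trailing_cons_of_adj h, trailing_cons_self, trailing_cons_self]
    by_cases hadj₁ : Θ.Adj w₁ u <;> by_cases hadj₂ : Θ.Adj w₂ u <;>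
      simp [trailing, h₁, h₂, hadj₁, hadj₂]
  | cons z _ ih =>
    obtain ⟨w, b⟩ := z
    by_cases hwu : w = u
    · subst hwu
      rw [trailing_cons_self, trailing_cons_self]
    by_cases hadj : Θ.Adj w u
    · rw [trailing_cons_of_adj hadj, trailing_cons_of_adj hadj, ih]
    · rw [trailing_cons_of_not_adj hwu hadj, trailing_cons_of_not_adj hwu hadj]

theorem ShuffleEquiv.length_eq {L L' : List (Syllable A)} (h : ShuffleEquiv Θ L L') :
    L.length = L'.length :=
  h.eq_of_shuffle fun _ _ h => h.length_eq

theorem ShuffleEquiv.trailing_eq {L L' : List (Syllable A)} (h : ShuffleEquiv Θ L L') (u : V) :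
    trailing Θ u L = trailing Θ u L' :=
  h.eq_of_shuffle fun _ _ h => h.trailing_eq u

theorem exists_shuffleEquiv_cons_of_trailing_eq_some {L : List (Syllable A)} {u : V} {b : A u}
    (h : trailing Θ u L = some b) : ∃ M, ShuffleEquiv Θ L (⟨u, b⟩ :: M) := by
  induction L with
  | nil => simp at h
  | cons x L ih =>
    obtain ⟨w, c⟩ := x
    by_cases hwu : w = u
    · subst hwu
      obtain rfl : c = b := by simpa using h
      exact ⟨L, .rfl⟩
    by_cases hadj : Θ.Adj w u
    · rw [trailing_cons_of_adj hadj] at h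
      obtain ⟨M, hM⟩ := ih h
      exact ⟨⟨w, c⟩ :: M,
        (hM.cons _).trans (Shuffle.swap ⟨w, c⟩ ⟨u, b⟩ M hadj).shuffleEquiv⟩
    · simp [trailing_cons_of_not_adj hwu hadj] at h

variable [∀ v, Group (A v)]

variable (Θ) in
/-- Words are stored last syllable first, so that right multiplication by a syllable acts at
the head of the list. -/
def evalWord (L : List (Syllable A)) : GraphProduct Θ A :=
  (L.map fun x => gpOf Θ A x.1 x.2).reverse.prod

@[simp] theorem evalWord_nil : evalWord Θ ([] : List (Syllable A)) = 1 := rfl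

@[simp] theorem evalWord_cons (x : Syllable A) (L : List (Syllable A)) :
    evalWord Θ (x :: L) = evalWord Θ L * gpOf Θ A x.1 x.2 := by
  simp [evalWord]

variable (Θ) in
def IsReduced : List (Syllable A) → Prop
  | [] => True
  | ⟨w, b⟩ :: L => b ≠ 1 ∧ trailing Θ w L = none ∧ IsReduced L

theorem IsReduced.ne_one {L : List (Syllable A)} (hL : IsReduced Θ L) :
    ∀ x ∈ L, x.2 ≠ 1 := by
  induction L with
  | nil => simp
  | cons x L ih =>
    obtain ⟨hb, -, hL⟩ := hL
    simpa [hb] using ih hL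

variable (Θ) in
open Classical in
noncomputable def mulSyl (u : V) (a : A u) : List (Syllable A) → List (Syllable A)
  | [] => if a = 1 then [] else [⟨u, a⟩]
  | ⟨w, b⟩ :: L =>
    if h : w = u then (if (h ▸ b) * a = 1 then L else ⟨u, (h ▸ b) * a⟩ :: L)
    else if Θ.Adj w u then ⟨w, b⟩ :: mulSyl u a L
    else if a = 1 then ⟨w, b⟩ :: L else ⟨u, a⟩ :: ⟨w, b⟩ :: L

@[simp] theorem mulSyl_one_nil (u : V) : mulSyl Θ u (1 : A u) [] = [] := by simp [mulSyl]

theorem mulSyl_nil {u : V} {a : A u} (ha : a ≠ 1) : mulSyl Θ u a [] = [⟨u, a⟩] := by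
  simp [mulSyl, ha]

theorem mulSyl_cons_self_of_mul_eq_one {u : V} {a b : A u} (h : b * a = 1)
    (L : List (Syllable A)) : mulSyl Θ u a (⟨u, b⟩ :: L) = L := by
  rw [mulSyl, dif_pos rfl, if_pos h]

theorem mulSyl_cons_self {u : V} {a b : A u} (h : b * a ≠ 1) (L : List (Syllable A)) :
    mulSyl Θ u a (⟨u, b⟩ :: L) = ⟨u, b * a⟩ :: L := by
  rw [mulSyl, dif_pos rfl, if_neg h]

theorem mulSyl_cons_of_adj {u w : V} (h : Θ.Adj w u) (a : A u) (b : A w)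
    (L : List (Syllable A)) : mulSyl Θ u a (⟨w, b⟩ :: L) = ⟨w, b⟩ :: mulSyl Θ u a L := by
  rw [mulSyl, dif_neg h.ne, if_pos h]

theorem mulSyl_cons_of_not_adj {u w : V} (h₁ : w ≠ u) (h₂ : ¬ Θ.Adj w u) {a : A u}
    (ha : a ≠ 1) (b : A w) (L : List (Syllable A)) :
    mulSyl Θ u a (⟨w, b⟩ :: L) = ⟨u, a⟩ :: ⟨w, b⟩ :: L := by
  rw [mulSyl, dif_neg h₁, if_neg h₂, if_neg ha]

theorem mulSyl_one_cons_of_not_adj {u w : V} (h₁ : w ≠ u) (h₂ : ¬ Θ.Adj w u) (b : A w)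
    (L : List (Syllable A)) : mulSyl Θ u (1 : A u) (⟨w, b⟩ :: L) = ⟨w, b⟩ :: L := by
  rw [mulSyl, dif_neg h₁, if_neg h₂, if_pos rfl]

theorem mulSyl_one {L : List (Syllable A)} (hL : ∀ x ∈ L, x.2 ≠ 1) (u : V) :
    mulSyl Θ u (1 : A u) L = L := by
  induction L with
  | nil => simp
  | cons x L ih =>
    obtain ⟨w, b⟩ := x
    have hb : b ≠ 1 := hL ⟨w, b⟩ List.mem_cons_self
    by_cases hwu : w = u
    · subst hwu
      rw [mulSyl_cons_self (by simpa using hb), mul_one]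
    · by_cases hadj : Θ.Adj w u
      · rw [mulSyl_cons_of_adj hadj, ih fun x hx => hL x (List.mem_cons_of_mem _ hx)]
      · rw [mulSyl_one_cons_of_not_adj hwu hadj]

theorem evalWord_mulSyl (u : V) (a : A u) (L : List (Syllable A)) :
    evalWord Θ (mulSyl Θ u a L) = evalWord Θ L * gpOf Θ A u a := by
  induction L with
  | nil =>
    rcases eq_or_ne a 1 with rfl | ha
    · simp
    · simp [mulSyl_nil ha]
  | cons x L ih =>
    obtain ⟨w, b⟩ := x
    by_cases hwu : w = u
    · subst hwu
      by_cases hba : b * a = 1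
      · rw [mulSyl_cons_self_of_mul_eq_one hba, evalWord_cons, mul_assoc, ← map_mul, hba,
          map_one, mul_one]
      · simp [mulSyl_cons_self hba, mul_assoc]
    · by_cases hadj : Θ.Adj w u
      · simp only [mulSyl_cons_of_adj hadj, evalWord_cons, ih, mul_assoc,
          (gpOf_commute hadj b a).eq]
      · rcases eq_or_ne a 1 with rfl | ha
        · simp [mulSyl_one_cons_of_not_adj hwu hadj]
        · simp [mulSyl_cons_of_not_adj hwu hadj ha]

theorem length_mulSyl_le (u : V) (a : A u) (L : List (Syllable A)) :
    (mulSyl Θ u a L).length ≤ L.length + 1 := by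
  induction L with
  | nil =>
    rcases eq_or_ne a 1 with rfl | ha
    · simp
    · simp [mulSyl_nil ha]
  | cons x L ih =>
    obtain ⟨w, b⟩ := x
    by_cases hwu : w = u
    · subst hwu
      by_cases hba : b * a = 1
      · simp only [mulSyl_cons_self_of_mul_eq_one hba, List.length_cons]
        omega
      · simp [mulSyl_cons_self hba]
    · by_cases hadj : Θ.Adj w u
      · simpa [mulSyl_cons_of_adj hadj] using ih
      · rcases eq_or_ne a 1 with rfl | ha
        · simp [mulSyl_one_cons_of_not_adj hwu hadj]
        · simp [mulSyl_cons_of_not_adj hwu hadj ha]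

theorem trailing_mulSyl_of_adj {u v : V} (h : Θ.Adj u v) (a : A u) (L : List (Syllable A)) :
    trailing Θ v (mulSyl Θ u a L) = trailing Θ v L := by
  induction L with
  | nil =>
    rcases eq_or_ne a 1 with rfl | ha
    · simp
    · rw [mulSyl_nil ha, trailing_cons_of_adj h, trailing_nil]
  | cons x L ih =>
    obtain ⟨w, b⟩ := x
    by_cases hwu : w = u
    · subst hwu
      by_cases hba : b * a = 1
      · rw [mulSyl_cons_self_of_mul_eq_one hba, trailing_cons_of_adj h]
      · rw [mulSyl_cons_self hba, trailing_cons_of_adj h, trailing_cons_of_adj h]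
    · by_cases hadj : Θ.Adj w u
      · rw [mulSyl_cons_of_adj hadj]
        by_cases hwv : w = v
        · subst hwv
          rw [trailing_cons_self, trailing_cons_self]
        · by_cases hadj' : Θ.Adj w v
          · rw [trailing_cons_of_adj hadj', trailing_cons_of_adj hadj', ih]
          · rw [trailing_cons_of_not_adj hwv hadj', trailing_cons_of_not_adj hwv hadj']
      · rcases eq_or_ne a 1 with rfl | ha
        · rw [mulSyl_one_cons_of_not_adj hwu hadj]
        · rw [mulSyl_cons_of_not_adj hwu hadj ha, trailing_cons_of_adj h]

theorem IsReduced.mulSyl {L : List (Syllable A)} (hL : IsReduced Θ L) (u : V) (a : A u) :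
    IsReduced Θ (mulSyl Θ u a L) := by
  induction L with
  | nil =>
    rcases eq_or_ne a 1 with rfl | ha
    · simp [IsReduced]
    · rw [mulSyl_nil ha]
      exact ⟨ha, rfl, trivial⟩
  | cons x L ih =>
    obtain ⟨w, b⟩ := x
    obtain ⟨hb, hbL, hL⟩ := hL
    by_cases hwu : w = u
    · subst hwu
      by_cases hba : b * a = 1
      · rwa [mulSyl_cons_self_of_mul_eq_one hba]
      · rw [mulSyl_cons_self hba]
        exact ⟨hba, hbL, hL⟩
    · by_cases hadj : Θ.Adj w u
      · rw [mulSyl_cons_of_adj hadj]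
        exact ⟨hb, by rwa [trailing_mulSyl_of_adj hadj.symm], ih hL⟩
      · rcases eq_or_ne a 1 with rfl | ha
        · rw [mulSyl_one_cons_of_not_adj hwu hadj]
          exact ⟨hb, hbL, hL⟩
        · rw [mulSyl_cons_of_not_adj hwu hadj ha]
          exact ⟨ha, trailing_cons_of_not_adj hwu hadj _ _, hb, hbL, hL⟩

theorem Shuffle.evalWord_eq {L L' : List (Syllable A)} (h : Shuffle Θ L L') :
    evalWord Θ L = evalWord Θ L' := by
  induction h with
  | swap x y L h => simp [mul_assoc, (gpOf_commute h x.2 y.2).eq]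
  | cons z _ ih => simp [ih]

theorem ShuffleEquiv.evalWord_eq {L L' : List (Syllable A)} (h : ShuffleEquiv Θ L L') :
    evalWord Θ L = evalWord Θ L' :=
  h.eq_of_shuffle fun _ _ h => h.evalWord_eq

theorem Shuffle.isReduced {L L' : List (Syllable A)} (h : Shuffle Θ L L')
    (hL : IsReduced Θ L) : IsReduced Θ L' := by
  induction h with
  | swap x y L h =>
    obtain ⟨w₁, b₁⟩ := x
    obtain ⟨w₂, b₂⟩ := y
    obtain ⟨hb₁, h₁, hb₂, h₂, hL⟩ := hL
    rw [trailing_cons_of_adj h.symm] at h₁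
    exact ⟨hb₂, by rwa [trailing_cons_of_adj h], hb₁, h₁, hL⟩
  | cons z h ih =>
    obtain ⟨w, b⟩ := z
    obtain ⟨hb, hbL, hL⟩ := hL
    exact ⟨hb, (h.trailing_eq w).symm.trans hbL, ih hL⟩

theorem ShuffleEquiv.isReduced {L L' : List (Syllable A)} (h : ShuffleEquiv Θ L L')
    (hL : IsReduced Θ L) : IsReduced Θ L' := by
  induction h with
  | refl => exact hL
  | tail _ h ih => exact h.isReduced ih

theorem shuffleEquiv_mulSyl_of_trailing_eq_none {L : List (Syllable A)} {u : V} {a : A u}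
    (h : trailing Θ u L = none) (ha : a ≠ 1) :
    ShuffleEquiv Θ (mulSyl Θ u a L) (⟨u, a⟩ :: L) := by
  induction L with
  | nil => rw [mulSyl_nil ha]; exact .rfl
  | cons x L ih =>
    obtain ⟨w, b⟩ := x
    by_cases hwu : w = u
    · subst hwu
      simp at h
    by_cases hadj : Θ.Adj w u
    · rw [trailing_cons_of_adj hadj] at h
      rw [mulSyl_cons_of_adj hadj]
      exact ((ih h).cons _).trans (Shuffle.swap ⟨w, b⟩ ⟨u, a⟩ L hadj).shuffleEquiv
    · rw [mulSyl_cons_of_not_adj hwu hadj ha]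
      exact .rfl

theorem length_mulSyl_of_trailing_eq_none {L : List (Syllable A)} {u : V} {a : A u}
    (h : trailing Θ u L = none) (ha : a ≠ 1) : (mulSyl Θ u a L).length = L.length + 1 :=
  (shuffleEquiv_mulSyl_of_trailing_eq_none h ha).length_eq

theorem shuffleEquiv_mulSyl_mul {L : List (Syllable A)} (hL : IsReduced Θ L) (u : V)
    (a b : A u) : ShuffleEquiv Θ (mulSyl Θ u (a * b) L) (mulSyl Θ u b (mulSyl Θ u a L)) := by
  rcases eq_or_ne a 1 with rfl | ha
  · rw [one_mul, mulSyl_one hL.ne_one]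
    exact .rfl
  induction L with
  | nil =>
    rw [mulSyl_nil ha]
    by_cases hab : a * b = 1
    · rw [mulSyl_cons_self_of_mul_eq_one hab, hab, mulSyl_one_nil]
      exact .rfl
    · rw [mulSyl_cons_self hab, mulSyl_nil hab]
      exact .rfl
  | cons x L ih =>
    obtain ⟨w, c⟩ := x
    obtain ⟨hc, hcL, hL⟩ := hL
    by_cases hwu : w = u
    · subst hwu
      by_cases hca : c * a = 1
      · have hcab : c * (a * b) = b := by rw [← mul_assoc, hca, one_mul]
        rw [mulSyl_cons_self_of_mul_eq_one hca]
        rcases eq_or_ne b 1 with rfl | hb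
        · rw [mulSyl_cons_self_of_mul_eq_one (by rwa [mul_one]), mulSyl_one hL.ne_one]
          exact .rfl
        · rw [mulSyl_cons_self (by rwa [hcab]), hcab]
          exact (shuffleEquiv_mulSyl_of_trailing_eq_none hcL hb).symm
      · rw [mulSyl_cons_self hca]
        by_cases hcab : c * a * b = 1
        · have hcab' : c * (a * b) = 1 := by rwa [← mul_assoc]
          rw [mulSyl_cons_self_of_mul_eq_one hcab, mulSyl_cons_self_of_mul_eq_one hcab']
          exact .rfl
        · have hcab' : c * (a * b) ≠ 1 := by rwa [← mul_assoc]
          rw [mulSyl_cons_self hcab, mulSyl_cons_self hcab', mul_assoc]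
          exact .rfl
    by_cases hadj : Θ.Adj w u
    · rw [mulSyl_cons_of_adj hadj, mulSyl_cons_of_adj hadj, mulSyl_cons_of_adj hadj]
      exact (ih hL).cons _
    · rw [mulSyl_cons_of_not_adj hwu hadj ha]
      by_cases hab : a * b = 1
      · rw [mulSyl_cons_self_of_mul_eq_one hab, hab, mulSyl_one_cons_of_not_adj hwu hadj]
        exact .rfl
      · rw [mulSyl_cons_self hab, mulSyl_cons_of_not_adj hwu hadj hab]
        exact .rfl

theorem Shuffle.shuffleEquiv_mulSyl {L L' : List (Syllable A)} (h : Shuffle Θ L L') (u : V)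
    (a : A u) : ShuffleEquiv Θ (mulSyl Θ u a L) (mulSyl Θ u a L') := by
  induction h with
  | swap x y L h =>
    obtain ⟨w₁, b₁⟩ := x
    obtain ⟨w₂, b₂⟩ := y
    dsimp only at h
    by_cases h₁ : w₁ = u
    · subst h₁
      rw [mulSyl_cons_of_adj h.symm]
      by_cases hba : b₁ * a = 1
      · rw [mulSyl_cons_self_of_mul_eq_one hba, mulSyl_cons_self_of_mul_eq_one hba]
        exact .rfl
      · rw [mulSyl_cons_self hba, mulSyl_cons_self hba]
        exact (Shuffle.swap ⟨w₁, b₁ * a⟩ ⟨w₂, b₂⟩ L h).shuffleEquiv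
    by_cases h₂ : w₂ = u
    · subst h₂
      rw [mulSyl_cons_of_adj h]
      by_cases hba : b₂ * a = 1
      · rw [mulSyl_cons_self_of_mul_eq_one hba, mulSyl_cons_self_of_mul_eq_one hba]
        exact .rfl
      · rw [mulSyl_cons_self hba, mulSyl_cons_self hba]
        exact (Shuffle.swap ⟨w₁, b₁⟩ ⟨w₂, b₂ * a⟩ L h).shuffleEquiv
    have hswap := (Shuffle.swap ⟨w₁, b₁⟩ ⟨w₂, b₂⟩ L h).shuffleEquiv
    by_cases hadj₁ : Θ.Adj w₁ u <;> by_cases hadj₂ : Θ.Adj w₂ u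
    · rw [mulSyl_cons_of_adj hadj₁, mulSyl_cons_of_adj hadj₂, mulSyl_cons_of_adj hadj₂,
        mulSyl_cons_of_adj hadj₁]
      exact (Shuffle.swap ⟨w₁, b₁⟩ ⟨w₂, b₂⟩ _ h).shuffleEquiv
    all_goals
      rcases eq_or_ne a 1 with rfl | ha
      · simpa [mulSyl, h₁, h₂, hadj₁, hadj₂] using hswap
    · rw [mulSyl_cons_of_adj hadj₁, mulSyl_cons_of_not_adj h₂ hadj₂ ha,
        mulSyl_cons_of_not_adj h₂ hadj₂ ha]
      exact (Shuffle.swap ⟨w₁, b₁⟩ ⟨u, a⟩ _ hadj₁).shuffleEquiv.trans (hswap.cons _)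
    · rw [mulSyl_cons_of_not_adj h₁ hadj₁ ha, mulSyl_cons_of_adj hadj₂,
        mulSyl_cons_of_not_adj h₁ hadj₁ ha]
      exact (hswap.cons _).trans
        (Shuffle.swap ⟨u, a⟩ ⟨w₂, b₂⟩ _ hadj₂.symm).shuffleEquiv
    · rw [mulSyl_cons_of_not_adj h₁ hadj₁ ha, mulSyl_cons_of_not_adj h₂ hadj₂ ha]
      exact hswap.cons _
  | cons z h ih =>
    obtain ⟨w, c⟩ := z
    by_cases hwu : w = u
    · subst hwu
      by_cases hca : c * a = 1
      · rw [mulSyl_cons_self_of_mul_eq_one hca, mulSyl_cons_self_of_mul_eq_one hca]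
        exact h.shuffleEquiv
      · rw [mulSyl_cons_self hca, mulSyl_cons_self hca]
        exact h.shuffleEquiv.cons _
    by_cases hadj : Θ.Adj w u
    · rw [mulSyl_cons_of_adj hadj, mulSyl_cons_of_adj hadj]
      exact ih.cons _
    rcases eq_or_ne a 1 with rfl | ha
    · rw [mulSyl_one_cons_of_not_adj hwu hadj, mulSyl_one_cons_of_not_adj hwu hadj]
      exact h.shuffleEquiv.cons _
    · rw [mulSyl_cons_of_not_adj hwu hadj ha, mulSyl_cons_of_not_adj hwu hadj ha]
      exact (h.shuffleEquiv.cons _).cons _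

theorem ShuffleEquiv.mulSyl {L L' : List (Syllable A)} (h : ShuffleEquiv Θ L L') (u : V)
    (a : A u) : ShuffleEquiv Θ (mulSyl Θ u a L) (mulSyl Θ u a L') := by
  induction h with
  | refl => exact .rfl
  | tail _ h ih => exact ih.trans (h.shuffleEquiv_mulSyl u a)

theorem shuffleEquiv_mulSyl_comm {L : List (Syllable A)} (hL : IsReduced Θ L) {u z : V}
    (huz : Θ.Adj u z) (a : A u) (c : A z) :
    ShuffleEquiv Θ (mulSyl Θ u a (mulSyl Θ z c L)) (mulSyl Θ z c (mulSyl Θ u a L)) := by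
  rcases eq_or_ne a 1 with rfl | ha
  · rw [mulSyl_one (hL.mulSyl z c).ne_one, mulSyl_one hL.ne_one]
    exact .rfl
  rcases eq_or_ne c 1 with rfl | hc
  · rw [mulSyl_one hL.ne_one, mulSyl_one (hL.mulSyl u a).ne_one]
    exact .rfl
  induction L with
  | nil =>
    rw [mulSyl_nil hc, mulSyl_nil ha, mulSyl_cons_of_adj huz.symm, mulSyl_cons_of_adj huz,
      mulSyl_nil ha, mulSyl_nil hc]
    exact (Shuffle.swap ⟨z, c⟩ ⟨u, a⟩ [] huz.symm).shuffleEquiv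
  | cons x L ih =>
    obtain ⟨w, b⟩ := x
    obtain ⟨-, -, hL⟩ := hL
    by_cases hwu : w = u
    · subst hwu
      rw [mulSyl_cons_of_adj huz]
      by_cases hba : b * a = 1
      · rw [mulSyl_cons_self_of_mul_eq_one hba, mulSyl_cons_self_of_mul_eq_one hba]
        exact .rfl
      · rw [mulSyl_cons_self hba, mulSyl_cons_self hba, mulSyl_cons_of_adj huz]
        exact .rfl
    by_cases hwz : w = z
    · subst hwz
      rw [mulSyl_cons_of_adj huz.symm]
      by_cases hbc : b * c = 1
      · rw [mulSyl_cons_self_of_mul_eq_one hbc, mulSyl_cons_self_of_mul_eq_one hbc]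
        exact .rfl
      · rw [mulSyl_cons_self hbc, mulSyl_cons_self hbc, mulSyl_cons_of_adj huz.symm]
        exact .rfl
    by_cases hadju : Θ.Adj w u <;> by_cases hadjz : Θ.Adj w z
    · rw [mulSyl_cons_of_adj hadjz, mulSyl_cons_of_adj hadju, mulSyl_cons_of_adj hadju,
        mulSyl_cons_of_adj hadjz]
      exact (ih hL).cons _
    · rw [mulSyl_cons_of_not_adj hwz hadjz hc, mulSyl_cons_of_adj huz.symm,
        mulSyl_cons_of_adj hadju, mulSyl_cons_of_not_adj hwz hadjz hc]
      exact .rfl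
    · rw [mulSyl_cons_of_adj hadjz, mulSyl_cons_of_not_adj hwu hadju ha,
        mulSyl_cons_of_not_adj hwu hadju ha, mulSyl_cons_of_adj huz, mulSyl_cons_of_adj hadjz]
      exact .rfl
    · rw [mulSyl_cons_of_not_adj hwz hadjz hc, mulSyl_cons_of_adj huz.symm,
        mulSyl_cons_of_not_adj hwu hadju ha, mulSyl_cons_of_adj huz,
        mulSyl_cons_of_not_adj hwz hadjz hc]
      exact (Shuffle.swap ⟨z, c⟩ ⟨u, a⟩ _ huz.symm).shuffleEquiv

variable (Θ A) in
def shuffleSetoid : Setoid {L : List (Syllable A) // IsReduced Θ L} where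
  r L M := ShuffleEquiv Θ L.1 M.1
  iseqv := ⟨fun _ => .rfl, .symm, .trans⟩

variable (Θ A) in
def NormalForm : Type := Quotient (shuffleSetoid Θ A)

namespace NormalForm

def mk (L : List (Syllable A)) (hL : IsReduced Θ L) : NormalForm Θ A :=
  Quotient.mk _ ⟨L, hL⟩

def empty : NormalForm Θ A := mk [] trivial

theorem exists_mk (t : NormalForm Θ A) : ∃ L hL, t = mk L hL := by
  obtain ⟨⟨L, hL⟩, rfl⟩ := Quotient.exists_rep t
  exact ⟨L, hL, rfl⟩

def eval : NormalForm Θ A → GraphProduct Θ A :=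
  Quotient.lift (fun L => evalWord Θ L.1) fun _ _ h => h.evalWord_eq

def length : NormalForm Θ A → ℕ :=
  Quotient.lift (fun L => L.1.length) fun _ _ h => h.length_eq

noncomputable def trailing (u : V) : NormalForm Θ A → Option (A u) :=
  Quotient.lift (fun L => GraphProduct.trailing Θ u L.1) fun _ _ h => h.trailing_eq u

@[simp] theorem eval_mk (L : List (Syllable A)) (hL : IsReduced Θ L) :
    (mk L hL).eval = evalWord Θ L := rfl

@[simp] theorem length_mk (L : List (Syllable A)) (hL : IsReduced Θ L) :
    (mk L hL).length = L.length := rfl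

@[simp] theorem trailing_mk (u : V) (L : List (Syllable A)) (hL : IsReduced Θ L) :
    (mk L hL).trailing u = GraphProduct.trailing Θ u L := rfl

noncomputable def mulSyl (u : V) (a : A u) : NormalForm Θ A → NormalForm Θ A :=
  Quotient.map (fun L => ⟨GraphProduct.mulSyl Θ u a L.1, L.2.mulSyl u a⟩)
    fun _ _ h => h.mulSyl u a

theorem mulSyl_mk (u : V) (a : A u) (L : List (Syllable A)) (hL : IsReduced Θ L) :
    (mk L hL).mulSyl u a = mk (GraphProduct.mulSyl Θ u a L) (hL.mulSyl u a) := rfl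

theorem mk_eq_mk {L M : List (Syllable A)} {hL : IsReduced Θ L} {hM : IsReduced Θ M}
    (h : ShuffleEquiv Θ L M) : mk L hL = mk M hM :=
  Quotient.sound h

theorem mulSyl_one (u : V) (t : NormalForm Θ A) : t.mulSyl u 1 = t := by
  obtain ⟨L, hL, rfl⟩ := t.exists_mk
  rw [mulSyl_mk]
  congr 1
  exact GraphProduct.mulSyl_one hL.ne_one u

theorem mulSyl_mul (u : V) (a b : A u) (t : NormalForm Θ A) :
    t.mulSyl u (a * b) = (t.mulSyl u a).mulSyl u b := by
  obtain ⟨L, hL, rfl⟩ := t.exists_mk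
  exact mk_eq_mk (shuffleEquiv_mulSyl_mul hL u a b)

theorem mulSyl_comm {u z : V} (huz : Θ.Adj u z) (a : A u) (c : A z) (t : NormalForm Θ A) :
    (t.mulSyl z c).mulSyl u a = (t.mulSyl u a).mulSyl z c := by
  obtain ⟨L, hL, rfl⟩ := t.exists_mk
  exact mk_eq_mk (shuffleEquiv_mulSyl_comm hL huz a c)

noncomputable def mulSylPerm (u : V) (a : A u) : Equiv.Perm (NormalForm Θ A) where
  toFun := mulSyl u a
  invFun := mulSyl u a⁻¹
  left_inv t := by rw [← mulSyl_mul, mul_inv_cancel, mulSyl_one]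
  right_inv t := by rw [← mulSyl_mul, inv_mul_cancel, mulSyl_one]

end NormalForm

noncomputable def rightAction : GraphProduct Θ A →* (Equiv.Perm (NormalForm Θ A))ᵐᵒᵖ :=
  lift (fun u =>
    { toFun a := .op (NormalForm.mulSylPerm u a)
      map_one' := congrArg MulOpposite.op (Equiv.ext (NormalForm.mulSyl_one u))
      map_mul' a b := congrArg MulOpposite.op (Equiv.ext (NormalForm.mulSyl_mul u a b)) })
    fun _ _ h a b => Commute.op (Equiv.ext (NormalForm.mulSyl_comm h a b))

theorem rightAction_mul_apply (g h : GraphProduct Θ A) (t : NormalForm Θ A) :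
    (rightAction (g * h)).unop t = (rightAction h).unop ((rightAction g).unop t) := by
  simp [Equiv.Perm.mul_apply]

theorem rightAction_gpOf_apply (u : V) (a : A u) (t : NormalForm Θ A) :
    (rightAction (gpOf Θ A u a)).unop t = t.mulSyl u a := by
  simp [rightAction, NormalForm.mulSylPerm]

theorem eval_rightAction (g : GraphProduct Θ A) (t : NormalForm Θ A) :
    ((rightAction g).unop t).eval = t.eval * g := by
  induction g using induction_on generalizing t with
  | one => simp
  | of u a =>
    obtain ⟨L, hL, rfl⟩ := t.exists_mk
    simp [rightAction_gpOf_apply, NormalForm.mulSyl_mk, evalWord_mulSyl]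
  | mul g h hg hh => rw [rightAction_mul_apply, hh, hg, mul_assoc]

noncomputable def normalForm (g : GraphProduct Θ A) : NormalForm Θ A :=
  (rightAction g).unop NormalForm.empty

theorem normalForm_one : normalForm (1 : GraphProduct Θ A) = .empty := by
  simp [normalForm]

theorem normalForm_mul (g h : GraphProduct Θ A) :
    normalForm (g * h) = (rightAction h).unop (normalForm g) :=
  rightAction_mul_apply g h _

theorem eval_normalForm (g : GraphProduct Θ A) : (normalForm g).eval = g := by
  rw [normalForm, eval_rightAction]
  exact one_mul g

theorem normalForm_evalWord {L : List (Syllable A)} (hL : IsReduced Θ L) :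
    normalForm (evalWord Θ L) = .mk L hL := by
  induction L with
  | nil => exact normalForm_one
  | cons x L ih =>
    obtain ⟨w, b⟩ := x
    obtain ⟨hb, hbL, hL⟩ := hL
    rw [evalWord_cons, normalForm_mul, ih hL, rightAction_gpOf_apply, NormalForm.mulSyl_mk]
    exact NormalForm.mk_eq_mk (shuffleEquiv_mulSyl_of_trailing_eq_none hbL hb)

theorem length_normalForm_prod_le {M : List (GraphProduct Θ A)}
    (hM : ∀ x ∈ M, IsSyllable Θ A x) : (normalForm M.prod).length ≤ M.length := by
  induction M using List.reverseRecOn with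
  | nil => rw [List.prod_nil, normalForm_one]; rfl
  | append_singleton M x ih =>
    obtain ⟨u, a, rfl⟩ := hM x (by simp)
    obtain ⟨L, hL, hML⟩ := (normalForm M.prod).exists_mk
    have hlen := ih fun y hy => hM y (by simp [hy])
    rw [hML, NormalForm.length_mk] at hlen
    rw [List.prod_append, List.prod_singleton, normalForm_mul, rightAction_gpOf_apply, hML,
      NormalForm.mulSyl_mk, NormalForm.length_mk, List.length_append, List.length_singleton]
    have := length_mulSyl_le (Θ := Θ) u a L
    omega

theorem sylLength_eq_length_normalForm (g : GraphProduct Θ A) :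
    sylLength Θ A g = (normalForm g).length := by
  obtain ⟨L, hL, hg⟩ := (normalForm g).exists_mk
  have hword : L.length ∈ {n | ∃ M : List (GraphProduct Θ A),
      (∀ x ∈ M, IsSyllable Θ A x) ∧ M.prod = g ∧ M.length = n} := by
    refine ⟨(L.map fun x => gpOf Θ A x.1 x.2).reverse, ?_, ?_, by simp⟩
    · simp only [List.mem_reverse, List.mem_map]
      rintro _ ⟨x, -, rfl⟩
      exact ⟨x.1, x.2, rfl⟩
    · rw [← eval_normalForm g, hg]
      rfl
  obtain ⟨M, hM, hMg, hMlen⟩ := Nat.sInf_mem ⟨_, hword⟩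
  refine le_antisymm ?_ ?_
  · rw [hg, NormalForm.length_mk]
    exact Nat.sInf_le hword
  · calc (normalForm g).length = (normalForm M.prod).length := by rw [hMg]
      _ ≤ M.length := length_normalForm_prod_le hM
      _ = sylLength Θ A g := hMlen

theorem endsInVertex_iff {v : V} {w : GraphProduct Θ A} :
    EndsInVertex Θ A v w ↔ (normalForm w).trailing v ≠ none := by
  constructor
  · rintro ⟨L, b, hne, hb, hL, rfl, hlen, hlast⟩ hnone
    have hsplit : L.dropLast.prod * gpOf Θ A v b = L.prod := by
      conv_rhs => rw [← List.dropLast_append_getLast? _ hlast]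
      rw [List.prod_append, List.prod_singleton]
    have hdrop : normalForm L.dropLast.prod = (normalForm L.prod).mulSyl v b⁻¹ := by
      rw [← rightAction_gpOf_apply, ← normalForm_mul, ← hsplit, mul_assoc, ← map_mul,
        mul_inv_cancel, map_one, mul_one]
    -- without a trailing `v`-syllable, removing the last syllable would lengthen the normal form
    obtain ⟨N, hN, hNe⟩ := (normalForm L.prod).exists_mk
    rw [hNe, NormalForm.trailing_mk] at hnone
    have hlonger : (normalForm L.dropLast.prod).length = (normalForm L.prod).length + 1 := by
      rw [hdrop, hNe, NormalForm.mulSyl_mk, NormalForm.length_mk, NormalForm.length_mk]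
      exact length_mulSyl_of_trailing_eq_none hnone (inv_ne_one.mpr hb)
    have hshort := length_normalForm_prod_le fun x hx => (hL x (List.dropLast_subset L hx)).1
    rw [← sylLength_eq_length_normalForm L.prod, ← hlen] at hlonger
    have hpos := List.length_pos_iff.mpr hne
    simp only [List.length_dropLast] at hshort
    omega
  · intro h
    obtain ⟨N, hN, hNe⟩ := (normalForm w).exists_mk
    rw [hNe, NormalForm.trailing_mk, Option.ne_none_iff_exists'] at h
    obtain ⟨β, hβ⟩ := h
    obtain ⟨K, hNK⟩ := exists_shuffleEquiv_cons_of_trailing_eq_some hβ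
    have hK : IsReduced Θ (⟨v, β⟩ :: K) := hNK.isReduced hN
    have hKw : evalWord Θ (⟨v, β⟩ :: K) = w := by
      rw [← eval_normalForm w, hNe, NormalForm.eval_mk]
      exact hNK.evalWord_eq.symm
    have hKlen : (⟨v, β⟩ :: K).length = sylLength Θ A w := by
      rw [sylLength_eq_length_normalForm, hNe, NormalForm.length_mk]
      exact hNK.length_eq.symm
    refine ⟨((⟨v, β⟩ :: K).map fun x => gpOf Θ A x.1 x.2).reverse, β, by simp, hK.1, ?_,
      by rw [← hKw]; rfl, by simpa using hKlen, by simp⟩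
    simp only [List.mem_reverse, List.mem_map]
    rintro _ ⟨x, hx, rfl⟩
    exact ⟨⟨x.1, x.2, rfl⟩, gpOf_ne_one (hK.ne_one x hx)⟩

theorem trailing_rightAction_of_mem_linkSubgroup {v : V} {l : GraphProduct Θ A}
    (hl : l ∈ linkSubgroup Θ A v) (t : NormalForm Θ A) :
    ((rightAction l).unop t).trailing v = t.trailing v := by
  induction hl using Subgroup.closure_induction generalizing t with
  | mem x hx =>
    simp only [Set.mem_iUnion, Set.mem_range] at hx
    obtain ⟨u, hu, a, rfl⟩ := hx
    obtain ⟨L, hL, rfl⟩ := t.exists_mk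
    rw [rightAction_gpOf_apply, NormalForm.mulSyl_mk, NormalForm.trailing_mk,
      NormalForm.trailing_mk, trailing_mulSyl_of_adj (Θ.adj_symm hu)]
  | one => simp
  | mul x y _ _ hx hy => rw [rightAction_mul_apply, hy, hx]
  | inv x _ hx => rw [← hx, ← rightAction_mul_apply, inv_mul_cancel, map_one]; rfl

theorem mem_minimalReps_iff {v : V} {w : GraphProduct Θ A} :
    w ∈ minimalReps Θ A v ↔ (normalForm w).trailing v = none := by
  change w = 1 ∨ ¬ EndsInVertex Θ A v w ↔ _
  rw [endsInVertex_iff, not_not]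
  refine ⟨?_, Or.inr⟩
  rintro (rfl | h)
  · rw [normalForm_one]
    rfl
  · exact h

theorem mul_mem_minimalReps {v : V} {w l : GraphProduct Θ A} (hw : w ∈ minimalReps Θ A v)
    (hl : l ∈ linkSubgroup Θ A v) : w * l ∈ minimalReps Θ A v := by
  rw [mem_minimalReps_iff, normalForm_mul, trailing_rightAction_of_mem_linkSubgroup hl]
  exact mem_minimalReps_iff.mp hw

theorem gpOf_mem_minimalReps {u v : V} (huv : u ≠ v) (hadj : ¬ Θ.Adj u v) (a : A u) :
    gpOf Θ A u a ∈ minimalReps Θ A v := by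
  rcases eq_or_ne a 1 with rfl | ha
  · exact Or.inl (map_one _)
  have hL : IsReduced Θ [⟨u, a⟩] := ⟨ha, rfl, trivial⟩
  have hword : evalWord Θ [⟨u, a⟩] = gpOf Θ A u a := by simp
  rw [mem_minimalReps_iff, ← hword, normalForm_evalWord hL, NormalForm.trailing_mk,
    trailing_cons_of_not_adj huv hadj]

end GraphProduct

theorem GraphIrreducible.exists_ne_not_adj {V : Type} {Θ : SimpleGraph V}
    (hΘ : GraphIrreducible Θ) {v : V} (hv : ∃ u, u ≠ v) :
    ∃ u, u ≠ v ∧ ¬ Θ.Adj v u := by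
  by_contra! h
  obtain ⟨u, hu⟩ := hv
  exact hΘ ⟨{v}, Set.singleton_nonempty v, ⟨u, hu⟩, by rintro _ rfl b hb; exact h b hb⟩

theorem link_action_on_minimalReps_general {V : Type}
    (Θ : SimpleGraph V) (hirr : GraphIrreducible Θ)
    (A : V → Type) [∀ v, Group (A v)] [∀ v, Nontrivial (A v)]
    (v : V) (hcard : ∃ u : V, u ≠ v) :
    -- `G_{lk(v)}` acts on `W` by right multiplication:
    (∀ w ∈ minimalReps Θ A v, ∀ l ∈ linkSubgroup Θ A v,
        w * l ∈ minimalReps Θ A v) ∧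
    -- `W` properly contains `G_{lk(v)}`:
    (linkSubgroup Θ A v : Set (GraphProduct Θ A)) ⊆ minimalReps Θ A v ∧
    (∃ w ∈ minimalReps Θ A v, w ∉ linkSubgroup Θ A v) ∧
    -- any fundamental domain for this action contains a non-identity element:
    (∀ T : Set (GraphProduct Θ A), T ⊆ minimalReps Θ A v →
      (∀ w ∈ minimalReps Θ A v,
        ∃! t, t ∈ T ∧ ∃ l ∈ linkSubgroup Θ A v, w = t * l) →
      ∃ t ∈ T, t ≠ 1) := by
  obtain ⟨u, huv, hvu⟩ := hirr.exists_ne_not_adj hcard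
  obtain ⟨a, ha⟩ := exists_ne (1 : A u)
  have hW := GraphProduct.gpOf_mem_minimalReps (A := A) huv (fun h => hvu h.symm) a
  have hlink := GraphProduct.gpOf_notMem_linkSubgroup (Θ := Θ) hvu ha
  refine ⟨fun w hw l hl => GraphProduct.mul_mem_minimalReps hw hl,
    fun l hl => by simpa using GraphProduct.mul_mem_minimalReps (Or.inl rfl) hl,
    ⟨_, hW, hlink⟩, fun T _ hT => ?_⟩
  obtain ⟨t, ⟨htT, l, hl, heq⟩, -⟩ := hT _ hW
  refine ⟨t, htT, ?_⟩
  rintro rfl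
  exact hlink (by rwa [heq, one_mul])

/-- if `Θ` is irreducible with more than one vertex and all vertex
groups are nontrivial then, for a fixed vertex `v`, the link subgroup `G_{lk(v)}` acts
on `W` by right multiplication, `W` properly contains `G_{lk(v)}`, and any fundamental
domain `W̃` for this action contains a non-identity element. -/
theorem link_action_on_minimalReps {V : Type} [Fintype V] [DecidableEq V]
    (Θ : SimpleGraph V) (hirr : GraphIrreducible Θ)
    (A : V → Type) [∀ v, Group (A v)] [∀ v, Nontrivial (A v)]
    (v : V) (hcard : ∃ u : V, u ≠ v) :
    -- `G_{lk(v)}` acts on `W` by right multiplication: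
    (∀ w ∈ minimalReps Θ A v, ∀ l ∈ linkSubgroup Θ A v,
        w * l ∈ minimalReps Θ A v) ∧
    -- `W` properly contains `G_{lk(v)}`:
    (linkSubgroup Θ A v : Set (GraphProduct Θ A)) ⊆ minimalReps Θ A v ∧
    (∃ w ∈ minimalReps Θ A v, w ∉ linkSubgroup Θ A v) ∧
    -- any fundamental domain for this action contains a non-identity element:
    (∀ T : Set (GraphProduct Θ A), T ⊆ minimalReps Θ A v →
      (∀ w ∈ minimalReps Θ A v,
        ∃! t, t ∈ T ∧ ∃ l ∈ linkSubgroup Θ A v, w = t * l) →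
      ∃ t ∈ T, t ≠ 1) :=
  link_action_on_minimalReps_general Θ hirr A v hcard
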